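/- The distributional sectional category is a (fiberwise) homotopy invariant: given fibrations p : E → B and q : Z → C, homotopy equivalences f : E → Z and g : B → C with homotopy inverses f', g', making the square q ∘ f = g ∘ p and p ∘ f' = g' ∘ q commute, one has dsecat(p) = dsecat(q). -/

import Mathlib

open MeasureTheory unitInterval

noncomputable section

/-- The path space `P(X) = C([0,1], X)` with the compact-open topology. -/
abbrev PathSp (X : Type*) [TopologicalSpace X] : Type _ := C(unitInterval, X)

/-- The space `B_n(Z)` of probability measures on a metric space `Z` supported on at most
`n` points, as a subspace of the space of probability measures with the Lévy–Prokhorov metric. -/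
def Bmeas (n : ℕ) (Z : Type*) [MetricSpace Z] : Type _ :=
  letI : MeasurableSpace Z := borel Z
  {μ : LevyProkhorov (ProbabilityMeasure Z) //
    ∃ S : Finset Z, S.card ≤ n ∧ (LevyProkhorov.toMeasureEquiv μ : ProbabilityMeasure Z) (↑S : Set Z) = 1}

noncomputable instance (n : ℕ) (Z : Type*) [MetricSpace Z] : TopologicalSpace (Bmeas n Z) :=
  letI : MeasurableSpace Z := borel Z
  haveI : BorelSpace Z := ⟨rfl⟩
  instTopologicalSpaceSubtype

/-- The underlying probability measure of an element of `B_n(Z)`. -/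
def Bmeas.meas {n : ℕ} {Z : Type*} [MetricSpace Z] (μ : Bmeas n Z) :
    @ProbabilityMeasure Z (borel Z) :=
  LevyProkhorov.toMeasureEquiv μ.1

/-- `μ ∈ B_n(Z)` is supported on the set `A`. -/
def DistributedOn {Z : Type*} [MetricSpace Z] {n : ℕ} (μ : Bmeas n Z) (A : Set Z) : Prop :=
  ∃ S : Finset Z, (↑S : Set Z) ⊆ A ∧ Bmeas.meas μ (↑S : Set Z) = 1

/-- The time points `t_j = j/(m-1)`, `j = 0, …, m-1`, in `[0,1]`. -/
def tpt (m : ℕ) (j : Fin m) : unitInterval :=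
  Set.projIcc 0 1 zero_le_one ((j : ℝ) / ((m : ℝ) - 1))

/-- A `k`-distributed `m`-navigation algorithm on `X`. -/
def IsNavAlg (m k : ℕ) {X : Type*} [MetricSpace X]
    (s : (Fin m → X) → Bmeas k (PathSp X)) : Prop :=
  Continuous s ∧ ∀ x : Fin m → X,
    DistributedOn (s x) {φ : PathSp X | ∀ j : Fin m, φ (tpt m j) = x j}

/-- The `m`-th sequential distributional topological complexity. -/
noncomputable def dTC (m : ℕ) (X : Type*) [MetricSpace X] : ℕ∞ :=
  sInf {c : ℕ∞ | ∃ k : ℕ, c = k ∧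
    ∃ s : (Fin m → X) → Bmeas (k + 1) (PathSp X), IsNavAlg m (k + 1) s}

/-- A `k`-contraction of `Y` to the point `y₀`. -/
def IsContr (k : ℕ) {Y : Type*} [MetricSpace Y] (y₀ : Y)
    (H : Y → Bmeas k (PathSp Y)) : Prop :=
  Continuous H ∧ ∀ y : Y,
    DistributedOn (H y) {φ : PathSp Y | φ 0 = y ∧ φ 1 = y₀}

/-- The distributional Lusternik–Schnirelmann category. -/
noncomputable def dcat (Y : Type*) [MetricSpace Y] : ℕ∞ :=
  sInf {c : ℕ∞ | ∃ k : ℕ, c = k ∧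
    ∃ (y₀ : Y) (H : Y → Bmeas (k + 1) (PathSp Y)), IsContr (k + 1) y₀ H}

/-- The classical `m`-th sequential topological complexity. -/
noncomputable def TCcl (m : ℕ) (X : Type*) [TopologicalSpace X] : ℕ∞ :=
  sInf {c : ℕ∞ | ∃ k : ℕ, c = k ∧
    ∃ (U : Fin (k + 1) → Set (Fin m → X)) (s : ∀ i : Fin (k + 1), C(U i, PathSp X)),
      (∀ i, IsOpen (U i)) ∧ (∀ x, ∃ i, x ∈ U i) ∧
      ∀ (i : Fin (k + 1)) (x : U i) (j : Fin m), (s i x) (tpt m j) = (x : Fin m → X) j}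

/-- The homotopy lifting property with respect to all spaces (Hurewicz fibration). -/
def IsHurFib {E B : Type*} [TopologicalSpace E] [TopologicalSpace B] (p : E → B) : Prop :=
  ∀ (Z : Type) [TopologicalSpace Z] (f : C(Z, E)) (H : C(Z × unitInterval, B)),
    (∀ z, H (z, 0) = p (f z)) →
      ∃ G : C(Z × unitInterval, E),
        (∀ z t, p (G (z, t)) = H (z, t)) ∧ ∀ z, G (z, 0) = f z

/-- `E_k(p)`: the space of probability measures supported on at most `k` points of a
single fiber of `p`, as a subspace of `B_k(E)`. -/
def FibMeas (k : ℕ) {E B : Type*} [MetricSpace E] (p : E → B) : Type _ :=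
  {μ : Bmeas k E // ∃ b : B, DistributedOn μ (p ⁻¹' {b})}

instance (k : ℕ) {E B : Type*} [MetricSpace E] (p : E → B) :
    TopologicalSpace (FibMeas k p) := instTopologicalSpaceSubtype

/-- The map `B_k(p) : E_k(p) → B` sending a fiberwise supported measure to its base point. -/
noncomputable def fibProj (k : ℕ) {E B : Type*} [MetricSpace E] (p : E → B)
    (μ : FibMeas k p) : B :=
  Classical.choose μ.2

/-- The distributional sectional category of a map `p : E → B`. -/
noncomputable def dsecat {E B : Type*} [MetricSpace E] [MetricSpace B] (p : E → B) : ℕ∞ :=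
  sInf {c : ℕ∞ | ∃ k : ℕ, c = k ∧
    ∃ s : B → FibMeas (k + 1) p, Continuous s ∧ ∀ b, fibProj (k + 1) p (s b) = b}

/-- The fibration `π_m : P(X) → X^m`, `φ ↦ (φ(t_1), …, φ(t_m))`. -/
def piFib (m : ℕ) (X : Type*) [TopologicalSpace X] (φ : PathSp X) : Fin m → X :=
  fun j => φ (tpt m j)

/-! A distributed section of `q` over `C` is pulled back along `g` and pushed into `E` fibrewise:
a point `z` over `g b` goes to `f' z`, which lies over `g' (g b)`, and then along the end of a lift
of the homotopy `g' ∘ g ≃ id` into the fibre over `b`. Pushing finitely supported measures forward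
along maps depending continuously on the base point is continuous for the Lévy–Prokhorov metric,
so this is a distributed section of `p` with the same number of points. Hence
`dsecat p ≤ dsecat q`, and the other inequality is symmetric. -/

open Metric Set Filter Topology
open scoped ENNReal NNReal

namespace MeasureTheory

lemma ProbabilityMeasure.apply_eq_one_iff_compl_null {Ω : Type*} [MeasurableSpace Ω]
    (P : ProbabilityMeasure Ω) {A : Set Ω} (hA : MeasurableSet A) :
    P A = 1 ↔ (P : Measure Ω) Aᶜ = 0 := by
  rw [prob_compl_eq_zero_iff hA, ← ENNReal.coe_inj,
    ProbabilityMeasure.ennreal_coeFn_eq_coeFn_toMeasure, ENNReal.coe_one]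

namespace Measure

variable {α β : Type*} [MeasurableSpace α] [MeasurableSpace β]

/-- A pushforward of `μ` that makes sense for non-measurable `v`; it agrees with `μ.map v`
when `μ` is concentrated on `S` and `v` is measurable. -/
def finsetMap (μ : Measure α) (S : Finset α) (v : α → β) : Measure β :=
  ∑ x ∈ S, μ {x} • dirac (v x)

variable [MeasurableSingletonClass α] {μ : Measure α} {S : Finset α} {v : α → β} {A : Set β}

lemma finsetMap_apply (hA : MeasurableSet A) : finsetMap μ S v A = μ (v ⁻¹' A ∩ S) := by
  classical
  have hfilter : (↑(S.filter (v · ∈ A)) : Set α) = v ⁻¹' A ∩ S := by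
    ext x; simp [and_comm]
  rw [finsetMap, finsetSum_apply, ← hfilter, ← sum_measure_singleton, Finset.sum_filter]
  refine Finset.sum_congr rfl fun x _ => ?_
  by_cases hx : v x ∈ A <;> simp [dirac_apply' _ hA, hx]

lemma finsetMap_apply_of_compl_null (hS : μ (↑S)ᶜ = 0) (hA : MeasurableSet A) :
    finsetMap μ S v A = μ (v ⁻¹' A) := by
  rw [finsetMap_apply hA, measure_inter_conull hS]

lemma finsetMap_compl_image [DecidableEq β] [MeasurableSingletonClass β] :
    finsetMap μ S v (↑(S.image v))ᶜ = 0 := by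
  rw [finsetMap_apply (S.image v).finite_toSet.measurableSet.compl]
  convert measure_empty (μ := μ)
  ext x
  simp only [mem_inter_iff, mem_preimage, mem_compl_iff, Finset.coe_image, Finset.mem_coe]
  exact iff_of_false (fun ⟨hvx, hx⟩ => hvx (mem_image_of_mem v hx)) (notMem_empty x)

lemma isProbabilityMeasure_finsetMap [IsProbabilityMeasure μ] (hS : μ (↑S)ᶜ = 0) :
    IsProbabilityMeasure (finsetMap μ S v) :=
  ⟨by rw [finsetMap_apply_of_compl_null hS MeasurableSet.univ, preimage_univ, measure_univ]⟩

end Measure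

end MeasureTheory

section LevyProkhorov

variable {Z E : Type*} [PseudoMetricSpace Z] [PseudoMetricSpace E]
  [MeasurableSpace Z] [MeasurableSingletonClass Z] [MeasurableSpace E] [OpensMeasurableSpace E]

lemma levyProkhorovDist_pushforward_le {μ ν : Measure Z} {μ' ν' : Measure E}
    [IsProbabilityMeasure μ'] [IsProbabilityMeasure ν'] {v w : Z → E}
    (hμ' : ∀ A, MeasurableSet A → μ' A = μ (v ⁻¹' A))
    (hν' : ∀ A, MeasurableSet A → ν' A = ν (w ⁻¹' A))
    {S T : Set Z} (hSfin : S.Finite) (hS : μ Sᶜ = 0) (hT : ν Tᶜ = 0)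
    {δ η : ℝ} (hδ : 0 < δ) (hδη : δ ≤ η) (hμν : levyProkhorovEDist μ ν < ENNReal.ofReal δ)
    (hclose : ∀ x ∈ S, ∀ y ∈ T, dist x y < δ → dist (v x) (w y) ≤ η) :
    levyProkhorovDist μ' ν' ≤ η := by
  refine levyProkhorovDist_le_of_forall_le μ' ν' (hδ.le.trans hδη) fun ε A hε hA => ?_
  have hthick : thickening δ (v ⁻¹' A ∩ S) ∩ T ⊆ w ⁻¹' thickening ε A := by
    rintro y ⟨hy, hyT⟩
    obtain ⟨x, ⟨hxA, hxS⟩, hxy⟩ := mem_thickening_iff.mp hy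
    exact mem_thickening_iff.mpr ⟨v x, hxA, by
      rw [dist_comm]; exact (hclose x hxS y hyT (by rwa [dist_comm])).trans_lt hε⟩
  calc μ' A = μ (v ⁻¹' A ∩ S) := by rw [hμ' A hA, measure_inter_conull hS]
    _ ≤ ν (thickening δ (v ⁻¹' A ∩ S)) + ENNReal.ofReal δ := by
      simpa [ENNReal.toReal_ofReal hδ.le] using left_measure_le_of_levyProkhorovEDist_lt hμν
        (hSfin.subset inter_subset_right).measurableSet
    _ = ν (thickening δ (v ⁻¹' A ∩ S) ∩ T) + ENNReal.ofReal δ := by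
      rw [measure_inter_conull hT]
    _ ≤ ν (w ⁻¹' thickening ε A) + ENNReal.ofReal ε := by
      gcongr
      exact hδη.trans hε.le
    _ = ν' (thickening ε A) + ENNReal.ofReal ε := by
      rw [hν' _ isOpen_thickening.measurableSet]

end LevyProkhorov

lemma exists_common_delta_of_continuousWithinAt {X Z E : Type*} [PseudoMetricSpace X]
    [PseudoMetricSpace Z] [PseudoMetricSpace E] {v : X → Z → E} {s : Set (X × Z)} {x₀ : X}
    (S₀ : Finset Z) (hv : ∀ y ∈ S₀, ContinuousWithinAt (fun x : X × Z => v x.1 x.2) s (x₀, y))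
    {ε : ℝ} (hε : 0 < ε) :
    ∃ d ∈ Ioo 0 ε, ∀ y ∈ S₀, ∀ x z, (x, z) ∈ s →
      dist x x₀ < d → dist z y < d → dist (v x z) (v x₀ y) < ε := by
  have hvS₀ : ∀ y ∈ S₀, ∀ᶠ d in 𝓝[>] (0 : ℝ), ∀ x z, (x, z) ∈ s →
      dist x x₀ < d → dist z y < d → dist (v x z) (v x₀ y) < ε := by
    intro y hy
    obtain ⟨d, hd, hball⟩ := Metric.continuousWithinAt_iff.1 (hv y hy) ε hε
    filter_upwards [Ioo_mem_nhdsGT hd] with d' hd' x z hxz hx hzy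
    exact hball hxz (max_lt (hx.trans hd'.2) (hzy.trans hd'.2))
  obtain ⟨d, hdS₀, hd⟩ := ((eventually_all_finset S₀).2 hvS₀ |>.and (Ioo_mem_nhdsGT hε)).exists
  exact ⟨d, hd, hdS₀⟩

section Bmeas

variable {n : ℕ} {Z E : Type*} [MetricSpace Z] [MetricSpace E]

lemma DistributedOn.mono {μ : Bmeas n Z} {A A' : Set Z} (h : DistributedOn μ A) (hAA' : A ⊆ A') :
    DistributedOn μ A' :=
  let ⟨S, hSA, hS⟩ := h
  ⟨S, hSA.trans hAA', hS⟩

lemma DistributedOn.inter_nonempty {μ : Bmeas n Z} {A A' : Set Z} (h : DistributedOn μ A)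
    (h' : DistributedOn μ A') : (A ∩ A').Nonempty := by
  borelize Z
  obtain ⟨S, hSA, hS⟩ := h
  obtain ⟨S', hSA', hS'⟩ := h'
  rw [ProbabilityMeasure.apply_eq_one_iff_compl_null _ S'.finite_toSet.measurableSet] at hS'
  have hSS' : μ.meas.toMeasure (↑S ∩ ↑S') ≠ 0 := by
    rw [measure_inter_conull hS', ← ProbabilityMeasure.ennreal_coeFn_eq_coeFn_toMeasure, hS]
    exact one_ne_zero
  exact (nonempty_of_measure_ne_zero hSS').mono (inter_subset_inter hSA hSA')

open Classical in
def Bmeas.map (μ : Bmeas n Z) (v : Z → E) : Bmeas n E :=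
  letI := borel Z
  haveI : BorelSpace Z := ⟨rfl⟩
  letI := borel E
  haveI : BorelSpace E := ⟨rfl⟩
  let S := Classical.choose μ.2
  have hS := Classical.choose_spec μ.2
  have hS' : μ.meas.toMeasure (↑S)ᶜ = 0 :=
    (ProbabilityMeasure.apply_eq_one_iff_compl_null _ S.finite_toSet.measurableSet).1 hS.2
  haveI := Measure.isProbabilityMeasure_finsetMap (v := v) hS'
  ⟨LevyProkhorov.toMeasureEquiv.symm ⟨Measure.finsetMap μ.meas S v, inferInstance⟩,
    S.image v, Finset.card_image_le.trans hS.1,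
    (ProbabilityMeasure.apply_eq_one_iff_compl_null _
      (S.image v).finite_toSet.measurableSet).2 Measure.finsetMap_compl_image⟩

lemma Bmeas.map_meas_apply (μ : Bmeas n Z) (v : Z → E) {A : Set E}
    (hA : MeasurableSet[borel E] A) : (μ.map v).meas A = μ.meas (v ⁻¹' A) := by
  borelize Z E
  have hS := Classical.choose_spec μ.2
  rw [← ENNReal.coe_inj, ProbabilityMeasure.ennreal_coeFn_eq_coeFn_toMeasure,
    ProbabilityMeasure.ennreal_coeFn_eq_coeFn_toMeasure]
  exact Measure.finsetMap_apply_of_compl_null ((ProbabilityMeasure.apply_eq_one_iff_compl_null _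
    (Classical.choose μ.2).finite_toSet.measurableSet).1 hS.2) hA

lemma DistributedOn.map {μ : Bmeas n Z} {A : Set Z} (h : DistributedOn μ A) (v : Z → E) :
    DistributedOn (μ.map v) (v '' A) := by
  borelize Z E
  classical
  obtain ⟨S, hSA, hS⟩ := h
  refine ⟨S.image v, by simpa using image_mono hSA, ?_⟩
  rw [Bmeas.map_meas_apply _ _ (S.image v).finite_toSet.measurableSet]
  refine le_antisymm (ProbabilityMeasure.apply_le_one _ _) (hS ▸ ?_)
  exact ProbabilityMeasure.apply_mono _ fun x hx => by simpa using ⟨x, hx, rfl⟩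

lemma Bmeas.continuousAt_map {X : Type*} [PseudoMetricSpace X] {μ : X → Bmeas n Z}
    {v : X → Z → E} {A : X → Set Z} {x₀ : X} (hμ : ContinuousAt μ x₀)
    (hA : ∀ x, DistributedOn (μ x) (A x))
    (hv : ∀ y ∈ A x₀, ContinuousWithinAt (fun x : X × Z => v x.1 x.2) {x | x.2 ∈ A x.1} (x₀, y)) :
    ContinuousAt (fun x => (μ x).map (v x)) x₀ := by
  borelize Z E
  have compl_null {x : X} {S : Finset Z} (hS : (μ x).meas S = 1) : (μ x).meas.toMeasure (↑S)ᶜ = 0 :=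
    (ProbabilityMeasure.apply_eq_one_iff_compl_null _ S.finite_toSet.measurableSet).1 hS
  have map_apply {x : X} {w : Z → E} (A : Set E) (hA : MeasurableSet A) :
      ((μ x).map w).meas.toMeasure A = (μ x).meas.toMeasure (w ⁻¹' A) := by
    rw [← ProbabilityMeasure.ennreal_coeFn_eq_coeFn_toMeasure,
      ← ProbabilityMeasure.ennreal_coeFn_eq_coeFn_toMeasure, Bmeas.map_meas_apply _ _ hA]
  obtain ⟨S₀, hS₀A, hS₀⟩ := hA x₀
  replace hμ := Metric.continuousAt_iff.1
    ((IsInducing.subtypeVal : IsInducing (fun ν : Bmeas n Z => ν.1)).continuousAt_iff.1 hμ)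
  refine (IsInducing.subtypeVal : IsInducing (fun ν : Bmeas n E => ν.1)).continuousAt_iff.2
    (Metric.continuousAt_iff.2 ?_)
  intro ε hε
  obtain ⟨d, hd, hdS₀⟩ := exists_common_delta_of_continuousWithinAt S₀
    (fun y hy => hv y (hS₀A hy)) (half_pos hε)
  obtain ⟨d', hd', hμd'⟩ := hμ d hd.1
  refine ⟨min d d', lt_min hd.1 hd', fun x hx => ?_⟩
  obtain ⟨S, hSA, hS⟩ := hA x
  have hμx : levyProkhorovEDist (μ x).meas.toMeasure (μ x₀).meas.toMeasure < ENNReal.ofReal d := by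
    rw [ENNReal.lt_ofReal_iff_toReal_lt (levyProkhorovEDist_ne_top _ _)]
    exact hμd' (hx.trans_le (min_le_right _ _))
  have : levyProkhorovDist ((μ x).map (v x)).meas.toMeasure
      ((μ x₀).map (v x₀)).meas.toMeasure ≤ ε / 2 := by
    refine levyProkhorovDist_pushforward_le (v := v x) (w := v x₀) map_apply map_apply
      S.finite_toSet (compl_null hS) (compl_null hS₀) hd.1 hd.2.le hμx fun z hz y hy hzy =>
        (hdS₀ y hy x z (hSA hz) (hx.trans_le (min_le_left _ _)) hzy).le
  exact this.trans_lt (half_lt_self hε)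

end Bmeas

section Dsecat

variable {E B Z C : Type*} [MetricSpace E] [MetricSpace Z] {p : E → B} {q : Z → C} {k : ℕ}

lemma distributedOn_fibProj (w : FibMeas k p) : DistributedOn w.1 (p ⁻¹' {fibProj k p w}) :=
  Classical.choose_spec w.2

lemma fibProj_eq_of_distributedOn {w : FibMeas k p} {b : B} (hb : DistributedOn w.1 (p ⁻¹' {b})) :
    fibProj k p w = b :=
  let ⟨_, hx, hx'⟩ := (distributedOn_fibProj w).inter_nonempty hb
  hx.symm.trans hx'

theorem dsecat_le_of_fiberwise_map [MetricSpace B] [MetricSpace C] (g : C(B, C)) (v : B → Z → E)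
    (hv : ContinuousOn (fun x : B × Z => v x.1 x.2) {x | q x.2 = g x.1})
    (hvp : ∀ b z, q z = g b → p (v b z) = b) : dsecat p ≤ dsecat q := by
  refine sInf_le_sInf ?_
  rintro _ ⟨k, rfl, s, hs, hsec⟩
  have hdist (b : B) : DistributedOn (s (g b)).1 (q ⁻¹' {g b}) := by
    simpa only [hsec] using distributedOn_fibProj (s (g b))
  have hdist' (b : B) : DistributedOn ((s (g b)).1.map (v b)) (p ⁻¹' {b}) :=
    ((hdist b).map (v b)).mono (image_subset_iff.2 fun z hz => hvp b z hz)
  refine ⟨k, rfl, fun b => ⟨(s (g b)).1.map (v b), b, hdist' b⟩, ?_,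
    fun b => fibProj_eq_of_distributedOn (hdist' b)⟩
  refine Continuous.subtype_mk (continuous_iff_continuousAt.2 fun b₀ => ?_) _
  exact Bmeas.continuousAt_map (continuous_subtype_val.comp (hs.comp g.continuous)).continuousAt
    hdist fun z hz => hv _ hz

end Dsecat

lemma IsHurFib.exists_transport {E B X : Type} [TopologicalSpace E] [TopologicalSpace B]
    [TopologicalSpace X] {p : E → B} (hp : IsHurFib p) {h₀ h₁ : C(X, B)} (hh : h₀.Homotopic h₁) :
    ∃ Φ : X → E → E, ContinuousOn (fun x : X × E => Φ x.1 x.2) {x | p x.2 = h₀ x.1} ∧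
      ∀ x e, p e = h₀ x → p (Φ x e) = h₁ x := by
  obtain ⟨H⟩ := hh
  obtain ⟨L, hLp, -⟩ := hp {x : X × E // p x.2 = h₀ x.1} ⟨fun w => w.1.2, by fun_prop⟩
    ⟨fun wt => H (wt.2, wt.1.1.1), by fun_prop⟩ fun w => by simp [w.2]
  classical
  refine ⟨fun x e => if h : p e = h₀ x then L (⟨(x, e), h⟩, 1) else e, ?_, fun x e h => ?_⟩
  · rw [continuousOn_iff_continuous_domRestrict]
    have hL1 : Continuous fun w : {x : X × E // p x.2 = h₀ x.1} => L (w, 1) := by fun_prop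
    exact hL1.congr fun w => by simp [w.2]
  · simp [h, hLp]

theorem IsHurFib.dsecat_le_of_homotopy_retract {E B Z C : Type} [MetricSpace E] [MetricSpace B]
    [MetricSpace Z] [MetricSpace C] {p : E → B} {q : Z → C} (hp : IsHurFib p) (f' : C(Z, E)) (g : C(B, C))
    (g' : C(C, B)) (hg : (g'.comp g).Homotopic (ContinuousMap.id B))
    (hsq' : ∀ z, p (f' z) = g' (q z)) : dsecat p ≤ dsecat q := by
  obtain ⟨Φ, hΦ, hΦp⟩ := hp.exists_transport hg
  refine dsecat_le_of_fiberwise_map g (fun b z => Φ b (f' z)) ?_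
    fun b z hz => hΦp b (f' z) (by simp [hsq', hz])
  refine hΦ.comp (f := fun x : B × Z => (x.1, f' x.2)) (by fun_prop)
    fun x (hx : q x.2 = g x.1) => ?_
  simp [hsq', hx]

theorem dsecat_homotopy_invariant_general (E B Z C : Type)
    [MetricSpace E] [MetricSpace B] [MetricSpace Z] [MetricSpace C]
    (p : E → B) (q : Z → C)
    (hpfib : IsHurFib p) (hqfib : IsHurFib q)
    (f : C(E, Z)) (f' : C(Z, E)) (g : C(B, C)) (g' : C(C, B))
    (hg : (g'.comp g).Homotopic (ContinuousMap.id B))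
    (hg' : (g.comp g').Homotopic (ContinuousMap.id C))
    (hsq : ∀ e : E, q (f e) = g (p e)) (hsq' : ∀ z : Z, p (f' z) = g' (q z)) :
    dsecat p = dsecat q :=
  le_antisymm (hpfib.dsecat_le_of_homotopy_retract f' g g' hg hsq')
    (hqfib.dsecat_le_of_homotopy_retract f g' g hg' hsq)

/-- `dsecat` is a homotopy invariant: given Hurewicz fibrations `p : E → B`, `q : Z → C`
and homotopy equivalences `f : E → Z`, `g : B → C` (with homotopy inverses `f'`, `g'`)
such that `q ∘ f = g ∘ p` and `p ∘ f' = g' ∘ q`, we have `dsecat p = dsecat q`. -/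
theorem dsecat_homotopy_invariant (E B Z C : Type)
    [MetricSpace E] [MetricSpace B] [MetricSpace Z] [MetricSpace C]
    (p : E → B) (q : Z → C) (hp : Continuous p) (hq : Continuous q)
    (hpfib : IsHurFib p) (hqfib : IsHurFib q)
    (f : C(E, Z)) (f' : C(Z, E)) (g : C(B, C)) (g' : C(C, B))
    (hf : (f'.comp f).Homotopic (ContinuousMap.id E))
    (hf' : (f.comp f').Homotopic (ContinuousMap.id Z))
    (hg : (g'.comp g).Homotopic (ContinuousMap.id B))
    (hg' : (g.comp g').Homotopic (ContinuousMap.id C))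
    (hsq : ∀ e : E, q (f e) = g (p e)) (hsq' : ∀ z : Z, p (f' z) = g' (q z)) :
    dsecat p = dsecat q :=
  dsecat_homotopy_invariant_general E B Z C p q hpfib hqfib f f' g g' hg hg' hsq hsq'
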